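/- Let η > 0, s ≥ 0, 0 < T ≤ 1, and S(t) the semigroup with symbol e^{(iβk|k|−η(k²−|k|))t} on H^s(𝕋). Then for all u, v ∈ C([0,T]; H^s(𝕋)), sup_{t∈[0,T]} ‖∫_0^t S(t−t') ∂_x(uv)(t') dt'‖_{H^s} ≤ C(s,η) T^{1/4} (sup_t ‖u(t)‖_{H^s})(sup_t ‖v(t)‖_{H^s}). -/

import Mathlib

/-!
Mode by mode, `|duhamel_k(t)| ≤ |k| · sup_{t'} |(uv)^(k, t')| · m_k(t)` with
`m_k(t) = ∫_0^t e^{-η(k²-|k|)(t-τ)} dτ`. Peetre's inequality `⟨k⟩^s ≤ 2^s ⟨j⟩^s ⟨k-j⟩^s` and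
Cauchy–Schwarz bound `⟨k⟩^s |(uv)^(k)|²` by `2^s ‖u‖²_{H^s} ‖v‖²_{H^s}`, which reduces the claim to
`∑_k k² m_k(t)² ≲ √t`. Since `m_k ≤ t` and `k² m_k ≤ 1 + 2/η`, the modes `|k| < t^{-1/2}` contribute
at most `t^{-3/2} · t² = √t`, and the others at most `∑_{|k| ≥ t^{-1/2}} k^{-2} ≲ √t`.
-/

/-- The H^s(𝕋) norm, expressed through the Fourier coefficients. -/
noncomputable def hsNorm (s : ℝ) (f : ℤ → ℂ) : ℝ :=
  Real.sqrt (2 * Real.pi * ∑' k : ℤ, (1 + (k:ℝ) ^ 2) ^ s * ‖f k‖ ^ 2)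

/-- The Fourier symbol `e^{(iβk|k| − η(k²−|k|)) t}` of the Chen–Lee semigroup `S(t)`. -/
noncomputable def semigroupSymbol (β η t : ℝ) (k : ℤ) : ℂ :=
  Complex.exp ((Complex.I * (β * (k:ℝ) * |(k:ℝ)| : ℝ) -
    ((η * ((k:ℝ) ^ 2 - |(k:ℝ)|) : ℝ) : ℂ)) * (t : ℝ))

/-- The k-th Fourier coefficient of the Duhamel term `∫_0^t S(t−t') ∂ₓ(uv)(t') dt'`. -/
noncomputable def duhamel (β η : ℝ) (u v : ℝ → ℤ → ℂ) (t : ℝ) (k : ℤ) : ℂ :=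
  ∫ t' in Set.Ioo (0:ℝ) t,
    semigroupSymbol β η (t - t') k *
      (Complex.I * (k:ℝ) * ∑' j : ℤ, u t' j * v t' (k - j))

open Finset MeasureTheory

theorem sum_range_sq_mul_le_of_le_min {x : ℕ → ℝ} {c t : ℝ} (ht0 : 0 ≤ t) (ht1 : t ≤ 1)
    (hx0 : ∀ n, 0 ≤ x n) (hxt : ∀ n, x n ≤ t) (hxc : ∀ n : ℕ, (n : ℝ) ^ 2 * x n ≤ c) (m : ℕ) :
    ∑ n ∈ range m, ((n : ℝ) * x n) ^ 2 ≤ (8 + 2 * c ^ 2) * √t := by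
  rcases ht0.eq_or_lt with rfl | ht0
  · simp [fun n : ℕ => le_antisymm (hxt n) (hx0 n)]
  set r := √t
  have hr : 0 < r := Real.sqrt_pos.2 ht0
  have hr1 : r ≤ 1 := Real.sqrt_le_one.2 ht1
  have hrt : r ^ 2 = t := Real.sq_sqrt ht0.le
  -- split the modes at `N ≈ t^{-1/2}`, where `n ^ 2 * t ^ 2` and `c ^ 2 / n ^ 2` cross
  set N := ⌈r⁻¹⌉₊
  have hN1 : 1 ≤ N := Nat.one_le_ceil_iff.2 (by positivity)
  have hNr : r⁻¹ ≤ N := Nat.le_ceil _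
  have hN2 : (N : ℝ) ≤ 2 * r⁻¹ := by
    have : 1 ≤ r⁻¹ := one_le_inv₀ hr |>.2 hr1
    linarith [Nat.ceil_lt_add_one (inv_nonneg.2 hr.le)]
  have hlow : ∑ n ∈ range m with n < N, ((n : ℝ) * x n) ^ 2 ≤ 8 * r := by
    have hcard : #{n ∈ range m | n < N} ≤ N := by
      simpa using card_le_card (fun n hn => by simp_all : {n ∈ range m | n < N} ⊆ range N)
    calc ∑ n ∈ range m with n < N, ((n : ℝ) * x n) ^ 2
        ≤ #{n ∈ range m | n < N} • ((N : ℝ) * t) ^ 2 := by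
          refine sum_le_card_nsmul _ _ _ fun n hn => ?_
          have : (n : ℝ) ≤ N := by exact_mod_cast (mem_filter.1 hn).2.le
          have := hx0 n
          gcongr
          exact hxt n
      _ ≤ N * ((N : ℝ) * t) ^ 2 := by rw [nsmul_eq_mul]; gcongr
      _ ≤ (2 * r⁻¹) * ((2 * r⁻¹) * t) ^ 2 := by gcongr
      _ = 8 * r := by rw [← hrt]; field_simp; ring
  have hhigh : ∑ n ∈ range m with ¬n < N, ((n : ℝ) * x n) ^ 2 ≤ 2 * c ^ 2 * r := by
    calc ∑ n ∈ range m with ¬n < N, ((n : ℝ) * x n) ^ 2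
        ≤ ∑ n ∈ range m with ¬n < N, c ^ 2 * ((n : ℝ) ^ 2)⁻¹ := by
          refine sum_le_sum fun n hn => ?_
          have hn : (0 : ℝ) < n := by
            have := (mem_filter.1 hn).2; exact_mod_cast (by omega : 0 < n)
          have : ((n : ℝ) ^ 2 * x n) ^ 2 ≤ c ^ 2 := by
            gcongr
            · exact mul_nonneg (sq_nonneg _) (hx0 n)
            · exact hxc n
          rw [← div_eq_mul_inv, le_div_iff₀ (by positivity)]
          linarith
      _ ≤ c ^ 2 * ∑ n ∈ Ioo (N - 1) m, ((n : ℝ) ^ 2)⁻¹ := by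
          rw [← mul_sum]
          refine mul_le_mul_of_nonneg_left ?_ (sq_nonneg c)
          refine sum_le_sum_of_subset_of_nonneg (fun n hn => ?_) fun _ _ _ => by positivity
          simp only [mem_filter, mem_range, mem_Ioo] at hn ⊢
          omega
      _ ≤ c ^ 2 * (2 / N) := by
          gcongr
          simpa [Nat.cast_sub hN1] using sum_Ioo_inv_sq_le (α := ℝ) (N - 1) m
      _ ≤ 2 * c ^ 2 * r := by
          rw [mul_div_assoc', div_le_iff₀ (by positivity)]
          nlinarith [(inv_le_iff_one_le_mul₀ hr).1 hNr, sq_nonneg c]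
  rw [← sum_filter_add_sum_filter_not _ (· < N)]
  linarith

theorem summable_and_tsum_sq_mul_le_of_le_min {x : ℕ → ℝ} {c t : ℝ} (ht0 : 0 ≤ t) (ht1 : t ≤ 1)
    (hx0 : ∀ n, 0 ≤ x n) (hxt : ∀ n, x n ≤ t) (hxc : ∀ n : ℕ, (n : ℝ) ^ 2 * x n ≤ c) :
    Summable (fun n : ℕ => ((n : ℝ) * x n) ^ 2) ∧
      ∑' n : ℕ, ((n : ℝ) * x n) ^ 2 ≤ (8 + 2 * c ^ 2) * √t :=
  have h := sum_range_sq_mul_le_of_le_min ht0 ht1 hx0 hxt hxc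
  ⟨summable_of_sum_range_le (fun _ => sq_nonneg _) h,
    Real.tsum_le_of_sum_range_le (fun _ => sq_nonneg _) h⟩

theorem Int.summable_and_tsum_sq_mul_le_of_le_min {x : ℤ → ℝ} {c t : ℝ} (ht0 : 0 ≤ t)
    (ht1 : t ≤ 1) (hx0 : ∀ k, 0 ≤ x k) (hxt : ∀ k, x k ≤ t)
    (hxc : ∀ k : ℤ, (k : ℝ) ^ 2 * x k ≤ c) :
    Summable (fun k : ℤ => ((k : ℝ) * x k) ^ 2) ∧
      ∑' k : ℤ, ((k : ℝ) * x k) ^ 2 ≤ 2 * ((8 + 2 * c ^ 2) * √t) := by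
  have hpos := _root_.summable_and_tsum_sq_mul_le_of_le_min (x := fun n : ℕ => x n)
    ht0 ht1 (fun n => hx0 n) (fun n => hxt n) (fun n => by simpa using hxc n)
  have hneg := _root_.summable_and_tsum_sq_mul_le_of_le_min (x := fun n : ℕ => x (-n))
    ht0 ht1 (fun n => hx0 _) (fun n => hxt _) (fun n => by simpa using hxc (-n))
  set f : ℤ → ℝ := fun k => ((k : ℝ) * x k) ^ 2
  have hpos' : Summable fun n : ℕ => f n := by simpa [f] using hpos.1
  have hneg' : Summable fun n : ℕ => f (-n) := by simpa [f] using hneg.1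
  refine ⟨hpos'.of_nat_of_neg hneg', ?_⟩
  rw [hpos'.tsum_of_nat_of_neg hneg']
  simp only [f, Int.cast_natCast, Int.cast_neg, neg_mul, neg_sq, Int.cast_zero, zero_mul]
  linarith [hpos.2, hneg.2]

theorem one_add_sq_add_rpow_le {s : ℝ} (hs : 0 ≤ s) (a b : ℝ) :
    (1 + (a + b) ^ 2) ^ s ≤ 2 ^ s * ((1 + a ^ 2) ^ s * (1 + b ^ 2) ^ s) := by
  rw [← Real.mul_rpow (by positivity) (by positivity), ← Real.mul_rpow (by positivity)
    (by positivity)]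
  gcongr
  nlinarith [sq_nonneg (a - b), sq_nonneg (a * b)]

theorem summable_and_tsum_sqrt_mul_sqrt_le {ι : Type*} {f g : ι → ℝ} (hf : ∀ i, 0 ≤ f i)
    (hg : ∀ i, 0 ≤ g i) (hfs : Summable f) (hgs : Summable g) :
    Summable (fun i => √(f i) * √(g i)) ∧
      ∑' i, √(f i) * √(g i) ≤ √(∑' i, f i) * √(∑' i, g i) := by
  have hsum : Summable (fun i => √(f i) * √(g i)) := by
    refine .of_nonneg_of_le (fun i => by positivity) (fun i => ?_) ((hfs.add hgs).div_const 2)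
    nlinarith [sq_nonneg (√(f i) - √(g i)), Real.sq_sqrt (hf i), Real.sq_sqrt (hg i)]
  refine ⟨hsum, hsum.tsum_le_of_sum_le fun S => ?_⟩
  refine (Real.sum_sqrt_mul_sqrt_le S hf hg).trans ?_
  gcongr
  exacts [hfs.sum_le_tsum S fun i _ => hf i, hgs.sum_le_tsum S fun i _ => hg i]

theorem one_add_sq_rpow_mul_norm_tsum_mul_sq_le {s : ℝ} (hs : 0 ≤ s) (k : ℤ) {U V : ℤ → ℂ}
    (hU : Summable fun j : ℤ => (1 + (j : ℝ) ^ 2) ^ s * ‖U j‖ ^ 2)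
    (hV : Summable fun j : ℤ => (1 + (j : ℝ) ^ 2) ^ s * ‖V j‖ ^ 2) :
    (1 + (k : ℝ) ^ 2) ^ s * ‖∑' j : ℤ, U j * V (k - j)‖ ^ 2 ≤
      2 ^ s * (∑' j : ℤ, (1 + (j : ℝ) ^ 2) ^ s * ‖U j‖ ^ 2) *
        (∑' j : ℤ, (1 + (j : ℝ) ^ 2) ^ s * ‖V j‖ ^ 2) := by
  set w : ℤ → ℝ := fun j => (1 + (j : ℝ) ^ 2) ^ s
  set f : ℤ → ℝ := fun j => w j * ‖U j‖ ^ 2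
  set g : ℤ → ℝ := fun j => w (k - j) * ‖V (k - j)‖ ^ 2
  have hw : ∀ j, 0 < w j := fun j => by positivity
  have hgs : Summable g := (Equiv.subLeft k).summable_iff.2 hV
  have hg_tsum : ∑' j, g j = ∑' j, w j * ‖V j‖ ^ 2 :=
    (Equiv.subLeft k).tsum_eq (fun j => w j * ‖V j‖ ^ 2)
  obtain ⟨hfg, hCS⟩ := summable_and_tsum_sqrt_mul_sqrt_le (fun j => by positivity)
    (fun j => by positivity) hU hgs
  have hterm : ∀ j, √(w k) * ‖U j * V (k - j)‖ ≤ √(2 ^ s) * (√(f j) * √(g j)) := by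
    intro j
    have hpeetre : w k ≤ 2 ^ s * (w j * w (k - j)) := by
      simpa [w] using one_add_sq_add_rpow_le hs (j : ℝ) ((k - j : ℤ) : ℝ)
    rw [← Real.sqrt_mul (by positivity), ← Real.sqrt_mul (by positivity),
      ← Real.sqrt_sq (norm_nonneg (U j * V (k - j))), ← Real.sqrt_mul (hw k).le]
    refine Real.sqrt_le_sqrt ?_
    calc w k * ‖U j * V (k - j)‖ ^ 2 ≤ 2 ^ s * (w j * w (k - j)) * ‖U j * V (k - j)‖ ^ 2 := by
          gcongr
      _ = 2 ^ s * (f j * g j) := by simp only [f, g, norm_mul]; ring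
  have hnorm : Summable fun j => ‖U j * V (k - j)‖ := by
    refine (summable_mul_left_iff (Real.sqrt_pos.2 (hw k)).ne').1 ?_
    exact .of_nonneg_of_le (fun j => by positivity) hterm (hfg.mul_left _)
  have hbound : √(w k) * ‖∑' j, U j * V (k - j)‖ ≤
      √(2 ^ s) * (√(∑' j, f j) * √(∑' j, g j)) := calc
    √(w k) * ‖∑' j, U j * V (k - j)‖ ≤ ∑' j, √(w k) * ‖U j * V (k - j)‖ := by
      rw [tsum_mul_left]; gcongr; exact norm_tsum_le_tsum_norm hnorm
    _ ≤ ∑' j, √(2 ^ s) * (√(f j) * √(g j)) :=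
      (hnorm.mul_left _).tsum_le_tsum hterm (hfg.mul_left _)
    _ ≤ √(2 ^ s) * (√(∑' j, f j) * √(∑' j, g j)) := by rw [tsum_mul_left]; gcongr
  have hf0 : 0 ≤ ∑' j, f j := tsum_nonneg fun j => by positivity
  have hg0 : 0 ≤ ∑' j, g j := tsum_nonneg fun j => by positivity
  have := pow_le_pow_left₀ (by positivity) hbound 2
  rw [mul_pow, mul_pow, mul_pow, Real.sq_sqrt (hw k).le, Real.sq_sqrt (by positivity),
    Real.sq_sqrt hf0, Real.sq_sqrt hg0, hg_tsum] at this
  simpa only [mul_assoc] using this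

theorem norm_semigroupSymbol (β η τ : ℝ) (k : ℤ) :
    ‖semigroupSymbol β η τ k‖ = Real.exp (-(η * ((k : ℝ) ^ 2 - |(k : ℝ)|) * τ)) := by
  rw [semigroupSymbol, Complex.norm_exp]
  congr 1
  simp [Complex.mul_re, -Complex.ofReal_pow, -Complex.ofReal_intCast]

theorem setIntegral_Ioo_exp_neg_mul_sub_le {a t : ℝ} (ha : 0 ≤ a) (ht : 0 ≤ t) :
    ∫ τ in Set.Ioo 0 t, Real.exp (-(a * (t - τ))) ≤ t := by
  have h := norm_setIntegral_le_of_norm_le_const (μ := volume) (s := Set.Ioo 0 t) (C := 1)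
    (f := fun τ => Real.exp (-(a * (t - τ))))
    measure_Ioo_lt_top fun τ hτ => by
      rw [Real.norm_of_nonneg (Real.exp_pos _).le, Real.exp_le_one_iff, neg_nonpos]
      exact mul_nonneg ha (sub_nonneg.2 hτ.2.le)
  simpa [ht] using (Real.le_norm_self _).trans h

theorem mul_setIntegral_Ioo_exp_neg_mul_sub (a : ℝ) {t : ℝ} (ht : 0 ≤ t) :
    a * ∫ τ in Set.Ioo 0 t, Real.exp (-(a * (t - τ))) = 1 - Real.exp (-(a * t)) := by
  have hderiv : ∀ τ ∈ Set.uIcc 0 t,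
      HasDerivAt (fun τ => Real.exp (-(a * (t - τ)))) (Real.exp (-(a * (t - τ))) * a) τ := by
    intro τ _
    have : HasDerivAt (fun τ => -(a * (t - τ))) a τ := by
      simpa using (((hasDerivAt_id τ).const_sub t).const_mul a).fun_neg
    exact this.exp
  rw [← integral_Ioc_eq_integral_Ioo, ← intervalIntegral.integral_of_le ht, mul_comm,
    ← intervalIntegral.integral_mul_const,
    intervalIntegral.integral_eq_sub_of_hasDerivAt hderiv
      ((by fun_prop : Continuous _).intervalIntegrable _ _)]
  simp

theorem Int.abs_cast_le_sq (k : ℤ) : |(k : ℝ)| ≤ (k : ℝ) ^ 2 := by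
  have : |k| ≤ k ^ 2 := by simpa using Int.natAbs_le_self_sq k
  exact_mod_cast this

/-- `∫_0^t |Ŝ(t - τ)(k)| dτ`, see `norm_semigroupSymbol`. -/
noncomputable def dampingIntegral (η t : ℝ) (k : ℤ) : ℝ :=
  ∫ τ in Set.Ioo 0 t, Real.exp (-(η * ((k : ℝ) ^ 2 - |(k : ℝ)|) * (t - τ)))

theorem dampingIntegral_nonneg (η t : ℝ) (k : ℤ) : 0 ≤ dampingIntegral η t k :=
  setIntegral_nonneg measurableSet_Ioo fun _ _ => (Real.exp_pos _).le

theorem dampingIntegral_le {η t : ℝ} (hη : 0 ≤ η) (ht : 0 ≤ t) (k : ℤ) :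
    dampingIntegral η t k ≤ t :=
  setIntegral_Ioo_exp_neg_mul_sub_le (mul_nonneg hη (sub_nonneg.2 k.abs_cast_le_sq)) ht

theorem sq_mul_dampingIntegral_le {η t : ℝ} (hη : 0 < η) (ht0 : 0 ≤ t) (ht1 : t ≤ 1) (k : ℤ) :
    (k : ℝ) ^ 2 * dampingIntegral η t k ≤ 1 + 2 / η := by
  set a := η * ((k : ℝ) ^ 2 - |(k : ℝ)|)
  set m := dampingIntegral η t k
  have hm0 : 0 ≤ m := dampingIntegral_nonneg η t k
  have hmt : m ≤ t := dampingIntegral_le hη.le ht0 k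
  have ham : a * m ≤ 1 := by
    rw [show a * m = 1 - Real.exp (-(a * t)) from mul_setIntegral_Ioo_exp_neg_mul_sub a ht0]
    linarith [Real.exp_pos (-(a * t))]
  -- `k ^ 2 ≤ 1 + 2 (k ^ 2 - |k|)` is `0 ≤ (|k| - 1) ^ 2`
  have hk : (k : ℝ) ^ 2 ≤ 1 + 2 / η * a := by
    have : 2 / η * a = 2 * ((k : ℝ) ^ 2 - |(k : ℝ)|) := by
      simp only [a]; field_simp
    rw [this]
    nlinarith [sq_abs (k : ℝ), sq_nonneg (|(k : ℝ)| - 1)]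
  calc (k : ℝ) ^ 2 * m ≤ (1 + 2 / η * a) * m := by gcongr
    _ = m + 2 / η * (a * m) := by ring
    _ ≤ 1 + 2 / η * 1 := by gcongr; linarith
    _ = 1 + 2 / η := by ring

theorem norm_duhamel_le {β η t B : ℝ} {u v : ℝ → ℤ → ℂ} {k : ℤ}
    (hB : ∀ t' ∈ Set.Ioo 0 t, ‖∑' j : ℤ, u t' j * v t' (k - j)‖ ≤ B) :
    ‖duhamel β η u v t k‖ ≤
      |(k : ℝ)| * B * dampingIntegral η t k := by
  rw [duhamel, dampingIntegral, ← integral_const_mul]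
  refine (norm_integral_le_integral_norm _).trans <| integral_mono_of_nonneg
    (ae_of_all _ fun _ => norm_nonneg _)
    ((by fun_prop : Continuous _).integrableOn_Icc.mono_set Set.Ioo_subset_Icc_self)
    ((ae_restrict_iff' measurableSet_Ioo).2 (ae_of_all _ fun τ hτ => ?_))
  dsimp only
  rw [norm_mul, norm_semigroupSymbol, norm_mul, norm_mul, Complex.norm_I, one_mul,
    Complex.norm_real, Real.norm_eq_abs, mul_comm]
  gcongr
  exact hB τ hτ

theorem one_add_sq_rpow_mul_norm_duhamel_sq_le {s β η t P Q : ℝ} (hs : 0 ≤ s) (hP : 0 ≤ P)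
    (hQ : 0 ≤ Q) {u v : ℝ → ℤ → ℂ}
    (hu : ∀ t' ∈ Set.Ioo 0 t, Summable fun j : ℤ => (1 + (j : ℝ) ^ 2) ^ s * ‖u t' j‖ ^ 2)
    (hv : ∀ t' ∈ Set.Ioo 0 t, Summable fun j : ℤ => (1 + (j : ℝ) ^ 2) ^ s * ‖v t' j‖ ^ 2)
    (huP : ∀ t' ∈ Set.Ioo 0 t, ∑' j : ℤ, (1 + (j : ℝ) ^ 2) ^ s * ‖u t' j‖ ^ 2 ≤ P)
    (hvQ : ∀ t' ∈ Set.Ioo 0 t, ∑' j : ℤ, (1 + (j : ℝ) ^ 2) ^ s * ‖v t' j‖ ^ 2 ≤ Q) (k : ℤ) :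
    (1 + (k : ℝ) ^ 2) ^ s * ‖duhamel β η u v t k‖ ^ 2 ≤ 2 ^ s * P * Q *
      ((k : ℝ) * dampingIntegral η t k) ^ 2 := by
  set w := (1 + (k : ℝ) ^ 2) ^ s
  have hw : 0 < w := by positivity
  have hconv : ∀ t' ∈ Set.Ioo 0 t, ‖∑' j : ℤ, u t' j * v t' (k - j)‖ ≤ √(2 ^ s * P * Q / w) := by
    intro t' ht'
    refine Real.le_sqrt_of_sq_le ((le_div_iff₀ hw).2 ?_)
    calc ‖∑' j : ℤ, u t' j * v t' (k - j)‖ ^ 2 * w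
        ≤ 2 ^ s * (∑' j : ℤ, (1 + (j : ℝ) ^ 2) ^ s * ‖u t' j‖ ^ 2) *
            (∑' j : ℤ, (1 + (j : ℝ) ^ 2) ^ s * ‖v t' j‖ ^ 2) := by
          rw [mul_comm]
          exact one_add_sq_rpow_mul_norm_tsum_mul_sq_le hs k (hu t' ht') (hv t' ht')
      _ ≤ 2 ^ s * P * Q := by
          have : 0 ≤ ∑' j : ℤ, (1 + (j : ℝ) ^ 2) ^ s * ‖u t' j‖ ^ 2 :=
            tsum_nonneg fun j => by positivity
          have : 0 ≤ ∑' j : ℤ, (1 + (j : ℝ) ^ 2) ^ s * ‖v t' j‖ ^ 2 :=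
            tsum_nonneg fun j => by positivity
          gcongr
          exacts [huP t' ht', hvQ t' ht']
  calc w * ‖duhamel β η u v t k‖ ^ 2
      ≤ w * (|(k : ℝ)| * √(2 ^ s * P * Q / w) * dampingIntegral η t k) ^ 2 := by
        gcongr
        exact norm_duhamel_le hconv
    _ = _ := by
        rw [mul_pow, mul_pow, sq_abs, Real.sq_sqrt (by positivity)]
        field_simp

theorem sq_hsNorm (s : ℝ) (f : ℤ → ℂ) :
    hsNorm s f ^ 2 = 2 * Real.pi * ∑' k : ℤ, (1 + (k : ℝ) ^ 2) ^ s * ‖f k‖ ^ 2 :=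
  Real.sq_sqrt (mul_nonneg (by positivity) (tsum_nonneg fun _ => by positivity))

theorem tsum_le_of_hsNorm_le {s M : ℝ} {f : ℤ → ℂ} (h : hsNorm s f ≤ M) :
    ∑' k : ℤ, (1 + (k : ℝ) ^ 2) ^ s * ‖f k‖ ^ 2 ≤ M ^ 2 / (2 * Real.pi) := by
  rw [le_div_iff₀ (by positivity), mul_comm, ← sq_hsNorm]
  exact pow_le_pow_left₀ (Real.sqrt_nonneg _) h 2

theorem sq_hsNorm_duhamel_le {s β η t P Q : ℝ} (hs : 0 ≤ s) (hη : 0 < η) (ht0 : 0 ≤ t)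
    (ht1 : t ≤ 1) (hP : 0 ≤ P) (hQ : 0 ≤ Q) {u v : ℝ → ℤ → ℂ}
    (hu : ∀ t' ∈ Set.Ioo 0 t, Summable fun j : ℤ => (1 + (j : ℝ) ^ 2) ^ s * ‖u t' j‖ ^ 2)
    (hv : ∀ t' ∈ Set.Ioo 0 t, Summable fun j : ℤ => (1 + (j : ℝ) ^ 2) ^ s * ‖v t' j‖ ^ 2)
    (huP : ∀ t' ∈ Set.Ioo 0 t, ∑' j : ℤ, (1 + (j : ℝ) ^ 2) ^ s * ‖u t' j‖ ^ 2 ≤ P)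
    (hvQ : ∀ t' ∈ Set.Ioo 0 t, ∑' j : ℤ, (1 + (j : ℝ) ^ 2) ^ s * ‖v t' j‖ ^ 2 ≤ Q) :
    hsNorm s (duhamel β η u v t) ^ 2 ≤
      2 * Real.pi * (2 ^ s * P * Q * (2 * ((8 + 2 * (1 + 2 / η) ^ 2) * √t))) := by
  have hmode := one_add_sq_rpow_mul_norm_duhamel_sq_le (β := β) (η := η) hs hP hQ hu hv huP hvQ
  obtain ⟨hsum, hsum_le⟩ := Int.summable_and_tsum_sq_mul_le_of_le_min ht0 ht1
    (dampingIntegral_nonneg η t) (dampingIntegral_le hη.le ht0)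
    (sq_mul_dampingIntegral_le hη ht0 ht1)
  rw [sq_hsNorm]
  gcongr
  calc ∑' k : ℤ, (1 + (k : ℝ) ^ 2) ^ s * ‖duhamel β η u v t k‖ ^ 2
      ≤ ∑' k : ℤ, 2 ^ s * P * Q * ((k : ℝ) * dampingIntegral η t k) ^ 2 :=
        (Summable.of_nonneg_of_le (fun _ => by positivity) hmode (hsum.mul_left _)).tsum_le_tsum
          hmode (hsum.mul_left _)
    _ ≤ _ := by rw [tsum_mul_left]; gcongr

/-- Let η > 0, s ≥ 0, 0 < T ≤ 1. For all u, v ∈ C([0,T]; H^s(𝕋)),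
`sup_{t∈[0,T]} ‖∫_0^t S(t−t') ∂ₓ(uv)(t') dt'‖_{H^s}
   ≤ C(s,η) T^{1/4} (sup_t ‖u(t)‖_{H^s}) (sup_t ‖v(t)‖_{H^s})`. -/
theorem stmt12 (s η : ℝ) (hs : 0 ≤ s) (hη : 0 < η) :
    ∃ C > (0:ℝ), ∀ (β T : ℝ), 0 < T → T ≤ 1 → ∀ u v : ℝ → ℤ → ℂ,
      (∀ k : ℤ, ContinuousOn (fun t => u t k) (Set.Icc 0 T)) →
      (∀ k : ℤ, ContinuousOn (fun t => v t k) (Set.Icc 0 T)) →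
      (∀ t ∈ Set.Icc (0:ℝ) T, Summable fun k : ℤ => (1 + (k:ℝ) ^ 2) ^ s * ‖u t k‖ ^ 2) →
      (∀ t ∈ Set.Icc (0:ℝ) T, Summable fun k : ℤ => (1 + (k:ℝ) ^ 2) ^ s * ‖v t k‖ ^ 2) →
      BddAbove (Set.range fun t : Set.Icc (0:ℝ) T => hsNorm s (u t)) →
      BddAbove (Set.range fun t : Set.Icc (0:ℝ) T => hsNorm s (v t)) →
      ∀ t ∈ Set.Icc (0:ℝ) T,
        hsNorm s (duhamel β η u v t) ≤
          C * T ^ ((1:ℝ) / 4) * (⨆ τ : Set.Icc (0:ℝ) T, hsNorm s (u τ)) *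
            (⨆ τ : Set.Icc (0:ℝ) T, hsNorm s (v τ)) := by
  set K := 2 * (8 + 2 * (1 + 2 / η) ^ 2)
  refine ⟨√(2 ^ s * K / (2 * Real.pi)), by positivity, ?_⟩
  intro β T hT hT1 u v _ _ huS hvS hbu hbv t ht
  set Mu := ⨆ τ : Set.Icc (0:ℝ) T, hsNorm s (u τ)
  set Mv := ⨆ τ : Set.Icc (0:ℝ) T, hsNorm s (v τ)
  have hMu : 0 ≤ Mu := Real.iSup_nonneg fun _ => Real.sqrt_nonneg _
  have hMv : 0 ≤ Mv := Real.iSup_nonneg fun _ => Real.sqrt_nonneg _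
  have hIcc : ∀ t' ∈ Set.Ioo 0 t, t' ∈ Set.Icc 0 T := fun t' h => ⟨h.1.le, h.2.le.trans ht.2⟩
  have hduh := sq_hsNorm_duhamel_le (β := β) hs hη ht.1 (ht.2.trans hT1)
    (by positivity : 0 ≤ Mu ^ 2 / (2 * Real.pi)) (by positivity : 0 ≤ Mv ^ 2 / (2 * Real.pi))
    (fun t' h => huS t' (hIcc t' h)) (fun t' h => hvS t' (hIcc t' h))
    (fun t' h => tsum_le_of_hsNorm_le (le_ciSup hbu ⟨t', hIcc t' h⟩))
    (fun t' h => tsum_le_of_hsNorm_le (le_ciSup hbv ⟨t', hIcc t' h⟩))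
  have hT4 : (T ^ ((1:ℝ) / 4)) ^ 2 = √T := by
    rw [Real.sqrt_eq_rpow, ← Real.rpow_natCast, ← Real.rpow_mul hT.le]
    norm_num
  refine (pow_le_pow_iff_left₀ (Real.sqrt_nonneg _) (by positivity) two_ne_zero).1 ?_
  calc hsNorm s (duhamel β η u v t) ^ 2 ≤ 2 ^ s * K / (2 * Real.pi) * √t * Mu ^ 2 * Mv ^ 2 := by
        refine hduh.trans_eq ?_
        simp only [K]
        field_simp
    _ ≤ _ := by
        rw [mul_pow, mul_pow, mul_pow, Real.sq_sqrt (by positivity), hT4]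
        gcongr
        exact ht.2
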